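/- arXiv:2406.02129 — 5 statements merged into one kernel-verified Lean document; each statement's English description precedes it below -/
import Mathlib

section
/- Let X be a Banach space and α > 0. Then every slice of the closed unit ball B_X has diameter at least α if and only if for every ε > 0 one has B_X = closure(conv({(x+y)/2 : x, y ∈ B_X, ‖x−y‖ ≥ α−ε})). -/
open Metric Set

/-- The set of midpoints `(x+y)/2` of points of the closed unit ball with `‖x-y‖ ≥ α`. -/
def midSet (X : Type*) [NormedAddCommGroup X] [NormedSpace ℝ X] (α : ℝ) : Set X :=
  {z | ∃ x ∈ Metric.closedBall (0:X) 1, ∃ y ∈ Metric.closedBall (0:X) 1,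
    α ≤ ‖x - y‖ ∧ z = (2:ℝ)⁻¹ • (x + y)}

/-- The slice of the closed unit ball given by `f ∈ X*` and `β > 0`. -/
def ballSlice {X : Type*} [NormedAddCommGroup X] [NormedSpace ℝ X]
    (f : X →L[ℝ] ℝ) (β : ℝ) : Set X :=
  {x ∈ Metric.closedBall (0:X) 1 | sSup (f '' Metric.closedBall (0:X) 1) - β < f x}

/-!
Both sides say that, for every `ε > 0`, the midpoint set `midSet X (α - ε)` meets every slice
of the unit ball. For the right-hand side this is Hahn–Banach: a subset `A` of the ball has
closed convex hull equal to the ball iff `A` meets every slice, since a point of the ball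
outside `closure (convexHull ℝ A)` is separated from it by a functional, which cuts off a slice
missing `A`.
For the diameter condition: the midpoint of two far-apart points of a slice lies in the slice,
and conversely if `(x + y)/2` lies in the slice of depth `β / 2` then `x` and `y` both lie in the
slice of depth `β`.
-/

theorem Metric.exists_lt_dist_of_lt_diam {E : Type*} [PseudoMetricSpace E] {s : Set E}
    (hs : s.Nonempty) {C : ℝ} (h : C < diam s) : ∃ x ∈ s, ∃ y ∈ s, C < dist x y := by
  by_contra! hC
  exact (diam_le_of_forall_dist_le_of_nonempty hs hC).not_gt h

section Slices

variable {X : Type*} [NormedAddCommGroup X] [NormedSpace ℝ X]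

lemma midSet_subset_closedBall (α : ℝ) : midSet X α ⊆ closedBall (0 : X) 1 := by
  rintro _ ⟨x, hx, y, hy, -, rfl⟩
  simpa [midpoint_eq_smul_add] using
    (convex_closedBall (0 : X) 1).midpoint_mem (x := x) (y := y) hx hy

lemma le_sSup_image_closedBall (f : X →L[ℝ] ℝ) {x : X} (hx : x ∈ closedBall (0 : X) 1) :
    f x ≤ sSup (f '' closedBall (0 : X) 1) :=
  le_csSup (f.lipschitz.isBounded_image isBounded_closedBall).bddAbove (mem_image_of_mem f hx)

lemma map_midpoint_smul (f : X →L[ℝ] ℝ) (x y : X) :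
    f ((2 : ℝ)⁻¹ • (x + y)) = 2⁻¹ * (f x + f y) := by
  simp [mul_add]

lemma ballSlice_nonempty (f : X →L[ℝ] ℝ) {β : ℝ} (hβ : 0 < β) :
    (ballSlice f β).Nonempty := by
  obtain ⟨_, ⟨x, hx, rfl⟩, hlt⟩ :=
    exists_lt_of_lt_csSup ((nonempty_closedBall.2 zero_le_one).image f) (sub_lt_self _ hβ)
  exact ⟨x, hx, hlt⟩

lemma isBounded_ballSlice (f : X →L[ℝ] ℝ) (β : ℝ) : Bornology.IsBounded (ballSlice f β) :=
  isBounded_closedBall.subset fun _ hx => hx.1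

lemma convex_ballSlice (f : X →L[ℝ] ℝ) (β : ℝ) : Convex ℝ (ballSlice f β) :=
  (convex_closedBall 0 1).inter (convex_halfSpace_gt f.isLinear _)

lemma closedBall_eq_closure_convexHull_iff {A : Set X} (hA : A ⊆ closedBall 0 1) :
    closedBall 0 1 = closure (convexHull ℝ A) ↔
      ∀ (f : X →L[ℝ] ℝ) (β : ℝ), 0 < β → (A ∩ ballSlice f β).Nonempty := by
  constructor
  · intro h f β hβ
    by_contra! hA_empty
    set M := sSup (f '' closedBall (0 : X) 1)
    have hA_le : A ⊆ {x | f x ≤ M - β} := fun a ha =>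
      not_lt.1 fun hlt => (eq_empty_iff_forall_notMem.1 hA_empty) a ⟨ha, hA ha, hlt⟩
    have hball_le : closedBall (0 : X) 1 ⊆ {x | f x ≤ M - β} :=
      h ▸ closure_minimal (convexHull_min hA_le (convex_halfSpace_le f.isLinear _))
        (isClosed_le f.cont continuous_const)
    have : M ≤ M - β := csSup_le ((nonempty_closedBall.2 zero_le_one).image f)
      (forall_mem_image.2 hball_le)
    linarith
  · intro h
    refine Subset.antisymm (fun x₀ hx₀ => ?_)
      (closure_minimal (convexHull_min hA (convex_closedBall _ _)) isClosed_closedBall)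
    by_contra hx₀_notMem
    obtain ⟨f, u, hfA, hfx₀⟩ := geometric_hahn_banach_closed_point
      (convex_convexHull ℝ A).closure isClosed_closure hx₀_notMem
    have hβ : 0 < sSup (f '' closedBall (0 : X) 1) - u := by
      linarith [le_sSup_image_closedBall f hx₀]
    obtain ⟨a, haA, -, hfa⟩ := h f _ hβ
    linarith [hfA a (subset_closure (subset_convexHull ℝ A haA))]

lemma midSet_inter_ballSlice_nonempty {α β ε : ℝ} {f : X →L[ℝ] ℝ}
    (hdiam : α ≤ diam (ballSlice f β)) (hβ : 0 < β) (hε : 0 < ε) :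
    (midSet X (α - ε) ∩ ballSlice f β).Nonempty := by
  obtain ⟨p, hp, q, hq, hpq⟩ :=
    exists_lt_dist_of_lt_diam (ballSlice_nonempty f hβ) (by linarith : α - ε < _)
  refine ⟨_, ⟨p, hp.1, q, hq.1, (dist_eq_norm p q ▸ hpq).le, rfl⟩, ?_⟩
  simpa [midpoint_eq_smul_add] using (convex_ballSlice f β).midpoint_mem hp hq

lemma le_diam_ballSlice_of_midSet_inter {γ β : ℝ} {f : X →L[ℝ] ℝ}
    (h : (midSet X γ ∩ ballSlice f (β / 2)).Nonempty) : γ ≤ diam (ballSlice f β) := by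
  obtain ⟨_, ⟨x, hx, y, hy, hxy, rfl⟩, -, hmid⟩ := h
  rw [map_midpoint_smul] at hmid
  have hfx := le_sSup_image_closedBall f hx
  have hfy := le_sSup_image_closedBall f hy
  have hx' : x ∈ ballSlice f β := ⟨hx, by linarith⟩
  have hy' : y ∈ ballSlice f β := ⟨hy, by linarith⟩
  calc γ ≤ dist x y := dist_eq_norm x y ▸ hxy
    _ ≤ diam (ballSlice f β) := dist_le_diam_of_mem (isBounded_ballSlice f β) hx' hy'

end Slices

theorem stmt0_general (X : Type*) [NormedAddCommGroup X] [NormedSpace ℝ X]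
    (α : ℝ) :
    (∀ (f : X →L[ℝ] ℝ) (β : ℝ), 0 < β → α ≤ Metric.diam (ballSlice f β)) ↔
      (∀ ε > (0:ℝ),
        Metric.closedBall (0:X) 1 = closure (convexHull ℝ (midSet X (α - ε)))) := by
  simp_rw [closedBall_eq_closure_convexHull_iff (midSet_subset_closedBall _)]
  constructor
  · intro h ε hε f β hβ
    exact midSet_inter_ballSlice_nonempty (h f β hβ) hβ hε
  · intro h f β hβ
    refine le_of_forall_pos_le_add fun ε hε => ?_
    linarith [le_diam_ballSlice_of_midSet_inter (h ε hε f (β / 2) (half_pos hβ))]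

theorem stmt0 (X : Type*) [NormedAddCommGroup X] [NormedSpace ℝ X] [CompleteSpace X]
    (α : ℝ) (hα : 0 < α) :
    (∀ (f : X →L[ℝ] ℝ) (β : ℝ), 0 < β → α ≤ Metric.diam (ballSlice f β)) ↔
      (∀ ε > (0:ℝ),
        Metric.closedBall (0:X) 1 = closure (convexHull ℝ (midSet X (α - ε)))) :=
  stmt0_general X α
end

section
/- Let X be a Banach space, x0 ∈ B_X, ε > 0 and α > 0, and suppose x0 does not belong to the closed convex hull of A = {(x+y)/2 : x, y ∈ B_X, ‖x−y‖ ≥ α−ε}. Then there exists a slice S of B_X containing x0 such that ‖u−v‖ < α−ε for all u, v ∈ S; in particular some slice of B_X has diameter at most α−ε. -/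
/-! Hahn–Banach separates `x0` from the closed convex hull of `A` by a functional `f` with
`f < c` on `A` and `c < f x0`. The slice `{f > c}` of the ball contains `x0`, and two of its points
at distance `≥ α - ε` would have their midpoint both in `A` and in the slice. -/

open Metric Set

section

variable {X : Type*} [NormedAddCommGroup X] [NormedSpace ℝ X]

theorem closedBall_subset_midSet {a : ℝ} (ha : a ≤ 0) : closedBall (0 : X) 1 ⊆ midSet X a := by
  intro x hx
  refine ⟨x, hx, x, hx, by simpa using ha, ?_⟩
  rw [← two_smul ℝ x, smul_smul]
  norm_num

theorem pos_of_notMem_closure_convexHull_midSet {x0 : X} {a : ℝ}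
    (hx0 : x0 ∈ closedBall (0 : X) 1) (h : x0 ∉ closure (convexHull ℝ (midSet X a))) : 0 < a := by
  by_contra! ha
  exact h (subset_closure (subset_convexHull ℝ _ (closedBall_subset_midSet ha hx0)))

theorem bddAbove_image_closedBall (f : X →L[ℝ] ℝ) : BddAbove (f '' closedBall (0 : X) 1) :=
  (f.lipschitz.isBounded_image isBounded_closedBall).bddAbove

theorem norm_sub_lt_of_mem_ballSlice {f : X →L[ℝ] ℝ} {β a : ℝ}
    (hf : ∀ z ∈ midSet X a, f z ≤ sSup (f '' closedBall (0 : X) 1) - β)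
    {u v : X} (hu : u ∈ ballSlice f β) (hv : v ∈ ballSlice f β) : ‖u - v‖ < a := by
  by_contra! huv
  have hmid := hf _ ⟨u, hu.1, v, hv.1, huv, rfl⟩
  simp only [map_smul, map_add, smul_eq_mul] at hmid
  linarith [hu.2, hv.2]

end

theorem stmt2_general {X : Type*} [NormedAddCommGroup X] [NormedSpace ℝ X]
    (x0 : X) (hx0 : x0 ∈ Metric.closedBall (0:X) 1) (ε α : ℝ)
    (h : x0 ∉ closure (convexHull ℝ (midSet X (α - ε)))) :
    ∃ (f : X →L[ℝ] ℝ) (β : ℝ), 0 < β ∧ x0 ∈ ballSlice f β ∧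
      (∀ u ∈ ballSlice f β, ∀ v ∈ ballSlice f β, ‖u - v‖ < α - ε) ∧
      Metric.diam (ballSlice f β) ≤ α - ε := by
  have hpos := pos_of_notMem_closure_convexHull_midSet hx0 h
  obtain ⟨f, c, hfc, hcx0⟩ := geometric_hahn_banach_closed_point
    (convex_convexHull ℝ (midSet X (α - ε))).closure isClosed_closure h
  set M := sSup (f '' closedBall (0 : X) 1)
  have hx0M : f x0 ≤ M := le_csSup (bddAbove_image_closedBall f) ⟨x0, hx0, rfl⟩
  have hf : ∀ z ∈ midSet X (α - ε), f z ≤ M - (M - c) := fun z hz =>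
    by simpa using (hfc z (subset_closure (subset_convexHull ℝ _ hz))).le
  have hsep := fun u (hu : u ∈ ballSlice f (M - c)) v (hv : v ∈ ballSlice f (M - c)) =>
    norm_sub_lt_of_mem_ballSlice hf hu hv
  refine ⟨f, M - c, by linarith, ⟨hx0, show M - (M - c) < f x0 by rwa [sub_sub_cancel]⟩, hsep, ?_⟩
  refine diam_le_of_forall_dist_le hpos.le fun u hu v hv => ?_
  exact (dist_eq_norm u v).trans_le (hsep u hu v hv).le

theorem stmt2 {X : Type*} [NormedAddCommGroup X] [NormedSpace ℝ X] [CompleteSpace X]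
    (x0 : X) (hx0 : x0 ∈ Metric.closedBall (0:X) 1) (ε α : ℝ) (hε : 0 < ε) (hα : 0 < α)
    (h : x0 ∉ closure (convexHull ℝ (midSet X (α - ε)))) :
    ∃ (f : X →L[ℝ] ℝ) (β : ℝ), 0 < β ∧ x0 ∈ ballSlice f β ∧
      (∀ u ∈ ballSlice f β, ∀ v ∈ ballSlice f β, ‖u - v‖ < α - ε) ∧
      Metric.diam (ballSlice f β) ≤ α - ε :=
  stmt2_general x0 hx0 ε α h
end

section
/- Let X and Y be Banach spaces, 1 ≤ p < ∞, α > 0 and n ∈ ℕ. Then C_{n²}^α(X ⊕_p Y) ≤ (C_n^α(X)^p + C_n^α(Y)^p)^{1/p}. In particular, if X and Y both have the uniform slice-D2P (i.e., C_n^β → 0 as n → ∞ for every 0 < β < 2), then so does X ⊕_p Y. -/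
/-!
A unit vector of `X ⊕_p Y` is `z = (x, y)` with `‖x‖^p + ‖y‖^p = 1`. Up to `ε`, `x / ‖x‖` is within
`C_n^α(X)` of a convex combination of `n` midpoints `(s + t) / 2` of `α`-separated pairs in `B_X`,
and similarly for `y / ‖y‖`. Pairing each midpoint on the `X` side with each one on the `Y` side
gives `n²` midpoints of the pairs `(‖x‖ s, ‖y‖ s')`, `(‖x‖ t, ‖y‖ t')`, which lie in `B_{X ⊕_p Y}`
and are `α`-separated precisely because `‖x‖^p + ‖y‖^p = 1`; with product weights, their convex
combination approximates `z` coordinatewise within `‖x‖ C_n^α(X)` and `‖y‖ C_n^α(Y)`.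
The uniform slice-D2P then passes to `X ⊕_p Y` because `C_n^α` is nonincreasing in `n`.
-/

open Metric Set Filter

def convN {X : Type*} [NormedAddCommGroup X] [NormedSpace ℝ X] (n : ℕ) (C : Set X) : Set X :=
  {z | ∃ (l : Fin n → ℝ) (x : Fin n → X), (∀ i, 0 ≤ l i) ∧ (∑ i, l i) = 1 ∧
    (∀ i, x i ∈ C) ∧ z = ∑ i, l i • x i}

noncomputable def Cna (X : Type*) [NormedAddCommGroup X] [NormedSpace ℝ X]
    (n : ℕ) (α : ℝ) : ℝ :=
  ⨆ x : Metric.sphere (0:X) 1, Metric.infDist (x : X) (convN n (midSet X α))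

/-- A Banach space has the uniform slice-D2P if `C_n^α(X) → 0` for every `0 < α < 2`. -/
def UniformSliceD2P (X : Type*) [NormedAddCommGroup X] [NormedSpace ℝ X] : Prop :=
  ∀ α : ℝ, 0 < α → α < 2 → Tendsto (fun n : ℕ => Cna X n α) atTop (nhds 0)

open scoped Pointwise

section ConvN

variable {X Y : Type*} [NormedAddCommGroup X] [NormedSpace ℝ X]
  [NormedAddCommGroup Y] [NormedSpace ℝ Y] {n m k : ℕ} {C D : Set X}

lemma convN_mono (h : C ⊆ D) : convN n C ⊆ convN n D := by
  rintro z ⟨l, x, hl, hsum, hx, rfl⟩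
  exact ⟨l, x, hl, hsum, fun i => h (hx i), rfl⟩

lemma convN_subset_of_le (h : m ≤ k) : convN m C ⊆ convN k C := by
  rintro z ⟨l, x, hl, hsum, hx, rfl⟩
  obtain ⟨r, rfl⟩ := Nat.exists_eq_add_of_le h
  have hm : 0 < m := Nat.pos_of_ne_zero <| by rintro rfl; simp at hsum
  refine ⟨Fin.append l 0, Fin.append x fun _ => x ⟨0, hm⟩, fun i => ?_, ?_, fun i => ?_, ?_⟩
  · exact Fin.addCases (fun i => by simp [hl]) (fun i => by simp) i
  · simp [Fin.sum_univ_add, hsum]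
  · exact Fin.addCases (fun i => by simp [hx]) (fun i => by simp [hx]) i
  · simp [Fin.sum_univ_add]

lemma mem_convN_of_mem {c : X} (hc : c ∈ C) (hn : n ≠ 0) : c ∈ convN n C :=
  convN_subset_of_le (Nat.one_le_iff_ne_zero.2 hn) ⟨fun _ => 1, fun _ => c, by simp, by simp,
    fun _ => hc, by simp⟩

lemma convN_nonempty_iff : (convN n C).Nonempty ↔ n ≠ 0 ∧ C.Nonempty := by
  constructor
  · rintro ⟨_, l, x, -, hsum, hx, -⟩
    have hn : n ≠ 0 := by rintro rfl; simp at hsum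
    exact ⟨hn, x ⟨0, Nat.pos_of_ne_zero hn⟩, hx _⟩
  · rintro ⟨hn, c, hc⟩
    exact ⟨c, mem_convN_of_mem hc hn⟩

lemma convN_subset_convexHull : convN n C ⊆ convexHull ℝ C := by
  rintro z ⟨l, x, hl, hsum, hx, rfl⟩
  exact (convex_convexHull ℝ C).sum_mem (fun i _ => hl i) hsum
    fun i _ => subset_convexHull ℝ C (hx i)

lemma image_convN_subset (f : X →ₗ[ℝ] Y) : f '' convN n C ⊆ convN n (f '' C) := by
  rintro _ ⟨_, ⟨l, x, hl, hsum, hx, rfl⟩, rfl⟩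
  exact ⟨l, f ∘ x, hl, hsum, fun i => ⟨x i, hx i, rfl⟩, by simp⟩

lemma smul_convN_subset (r : ℝ) : r • convN n C ⊆ convN n (r • C) := by
  have h := image_convN_subset (n := n) (C := C) (r • LinearMap.id)
  simp only [LinearMap.smul_apply, LinearMap.id_coe, id_eq, Set.image_smul] at h
  exact h

lemma prodMk_mem_convN_mul {A : Set X} {B : Set Y} {u : X} {v : Y}
    (hu : u ∈ convN n A) (hv : v ∈ convN m B) : (u, v) ∈ convN (n * m) (A ×ˢ B) := by
  obtain ⟨l, x, hl, hlsum, hx, rfl⟩ := hu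
  obtain ⟨μ, y, hμ, hμsum, hy, rfl⟩ := hv
  let e : Fin (n * m) ≃ Fin n × Fin m := finProdFinEquiv.symm
  refine ⟨fun k => l (e k).1 * μ (e k).2, fun k => (x (e k).1, y (e k).2),
    fun k => mul_nonneg (hl _) (hμ _), ?_, fun k => ⟨hx _, hy _⟩, ?_⟩
  · rw [e.sum_comp fun ij => l ij.1 * μ ij.2]
    simp [Fintype.sum_prod_type, ← Finset.mul_sum, hμsum, hlsum]
  · rw [e.sum_comp fun ij => (l ij.1 * μ ij.2) • (x ij.1, y ij.2)]
    ext
    · simp [Fintype.sum_prod_type, Prod.fst_sum, mul_smul, ← Finset.smul_sum,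
        ← Finset.sum_smul, hμsum]
    · rw [Fintype.sum_prod_type, Finset.sum_comm]
      simp [Prod.snd_sum, mul_comm (l _), mul_smul, ← Finset.smul_sum, ← Finset.sum_smul, hlsum]

end ConvN

section MidSet

variable {X : Type*} [NormedAddCommGroup X] [NormedSpace ℝ X] {n : ℕ} {α : ℝ}

/-- For `r > 0` this is `r • midSet X α`; unlike that set, it contains `0` for `r = 0` even when
`midSet X α` is empty. -/
def scaledMidSet (X : Type*) [NormedAddCommGroup X] [NormedSpace ℝ X] (r α : ℝ) : Set X :=
  {z | ∃ x ∈ closedBall (0:X) r, ∃ y ∈ closedBall (0:X) r,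
    r * α ≤ ‖x - y‖ ∧ z = (2:ℝ)⁻¹ • (x + y)}

lemma midSet_eq_scaledMidSet_one : midSet X α = scaledMidSet X 1 α := by
  simp [midSet, scaledMidSet]

lemma zero_mem_scaledMidSet (x : X) (hα : α ≤ 2) : (0 : X) ∈ scaledMidSet X ‖x‖ α := by
  refine ⟨x, by simp, -x, by simp, ?_, by simp⟩
  rw [sub_neg_eq_add, ← two_smul ℝ x, norm_smul, Real.norm_two]
  exact mul_le_mul_of_nonneg_left hα (norm_nonneg x) |>.trans_eq (mul_comm _ _)

lemma smul_midSet_subset {r : ℝ} (hr : 0 ≤ r) : r • midSet X α ⊆ scaledMidSet X r α := by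
  rintro _ ⟨_, ⟨x, hx, y, hy, hxy, rfl⟩, rfl⟩
  rw [mem_closedBall_zero_iff] at hx hy
  refine ⟨r • x, ?_, r • y, ?_, ?_, by simp only [smul_comm r, smul_add]⟩
  · simpa [norm_smul, abs_of_nonneg hr] using mul_le_of_le_one_right hr hx
  · simpa [norm_smul, abs_of_nonneg hr] using mul_le_of_le_one_right hr hy
  · rw [← smul_sub, norm_smul, Real.norm_of_nonneg hr]
    exact mul_le_mul_of_nonneg_left hxy hr

lemma le_two_of_midSet_nonempty (h : (midSet X α).Nonempty) : α ≤ 2 := by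
  obtain ⟨_, x, hx, y, hy, hxy, -⟩ := h
  rw [mem_closedBall_zero_iff] at hx hy
  linarith [norm_sub_le x y]

lemma convN_midSet_subset_closedBall : convN n (midSet X α) ⊆ closedBall (0:X) 1 := by
  refine convN_subset_convexHull.trans (convexHull_min ?_ (convex_closedBall 0 1))
  rintro _ ⟨x, hx, y, hy, -, rfl⟩
  rw [smul_add]
  exact convex_closedBall (0:X) 1 hx hy (by norm_num) (by norm_num) (by norm_num)

end MidSet

section Cna

variable {X : Type*} [NormedAddCommGroup X] [NormedSpace ℝ X] {n m k : ℕ} {α : ℝ}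

lemma Cna_nonneg : 0 ≤ Cna X n α :=
  Real.iSup_nonneg fun _ => infDist_nonneg

lemma infDist_le_Cna {z : X} (hz : ‖z‖ = 1) : infDist z (convN n (midSet X α)) ≤ Cna X n α := by
  refine le_ciSup (f := fun w : sphere (0:X) 1 => infDist (w : X) (convN n (midSet X α))) ⟨2, ?_⟩
    ⟨z, mem_sphere_zero_iff_norm.2 hz⟩
  rintro _ ⟨⟨w, hw⟩, rfl⟩
  rcases (convN n (midSet X α)).eq_empty_or_nonempty with he | ⟨c, hc⟩
  · simp [he]
  · have hw1 : ‖w‖ = 1 := mem_sphere_zero_iff_norm.1 hw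
    have hc1 : ‖c‖ ≤ 1 := mem_closedBall_zero_iff.1 (convN_midSet_subset_closedBall hc)
    calc infDist w (convN n (midSet X α)) ≤ dist w c := infDist_le_dist_of_mem hc
      _ ≤ ‖w‖ + ‖c‖ := by rw [dist_eq_norm]; exact norm_sub_le w c
      _ ≤ 2 := by linarith

lemma Cna_le_of_le (hm : m ≠ 0) (h : m ≤ k) : Cna X k α ≤ Cna X m α := by
  refine Real.iSup_le (fun ⟨z, hz⟩ => ?_) Cna_nonneg
  rcases (convN k (midSet X α)).eq_empty_or_nonempty with he | hne
  · rw [he, infDist_empty]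
    exact Cna_nonneg
  · have hne' := convN_nonempty_iff.2 ⟨hm, (convN_nonempty_iff.1 hne).2⟩
    exact (infDist_le_infDist_of_subset (convN_subset_of_le h) hne').trans
      (infDist_le_Cna (mem_sphere_zero_iff_norm.1 hz))

lemma infDist_convN_scaledMidSet_le (hn : n ≠ 0) (hα : α ≤ 2) (x : X) :
    infDist x (convN n (scaledMidSet X ‖x‖ α)) ≤ ‖x‖ * Cna X n α := by
  rcases eq_or_ne x 0 with rfl | hx
  · rw [infDist_zero_of_mem (mem_convN_of_mem (zero_mem_scaledMidSet 0 hα) hn)]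
    simp
  set u := ‖x‖⁻¹ • x
  have hu : ‖u‖ = 1 := norm_smul_inv_norm hx
  have hxu : ‖x‖ • u = x := by simp [u, smul_smul, hx]
  have hne : (convN n (midSet X α)).Nonempty := by
    refine convN_nonempty_iff.2 ⟨hn, 0, ?_⟩
    simpa [midSet_eq_scaledMidSet_one, hu] using zero_mem_scaledMidSet u hα
  calc infDist x (convN n (scaledMidSet X ‖x‖ α))
      ≤ infDist (‖x‖ • u) (‖x‖ • convN n (midSet X α)) := by
        rw [hxu]
        exact infDist_le_infDist_of_subset
          ((smul_convN_subset _).trans (convN_mono (smul_midSet_subset (norm_nonneg x))))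
          hne.smul_set
    _ = ‖x‖ * infDist u (convN n (midSet X α)) := by
        rw [infDist_smul₀ (norm_ne_zero_iff.2 hx), norm_norm]
    _ ≤ ‖x‖ * Cna X n α := by
        gcongr
        exact infDist_le_Cna hu

end Cna

lemma WithLp.prod_norm_rpow_eq_add {M N : Type*} [SeminormedAddCommGroup M]
    [SeminormedAddCommGroup N] {p : ENNReal} [Fact (1 ≤ p)] (hp : 0 < p.toReal)
    (z : WithLp p (M × N)) : ‖z‖ ^ p.toReal = ‖z.fst‖ ^ p.toReal + ‖z.snd‖ ^ p.toReal := by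
  rw [WithLp.prod_norm_eq_add hp, one_div, Real.rpow_inv_rpow (by positivity) hp.ne']

lemma infDist_withLp_prod_le {M N : Type*} [PseudoMetricSpace M] [PseudoMetricSpace N]
    {p : ENNReal} [Fact (1 ≤ p)] (hp : 0 < p.toReal) {S : Set M} {T : Set N} (hS : S.Nonempty)
    (hT : T.Nonempty) (z : WithLp p (M × N)) :
    infDist z (WithLp.toLp p '' (S ×ˢ T)) ≤
      (infDist z.fst S ^ p.toReal + infDist z.snd T ^ p.toReal) ^ (1 / p.toReal) := by
  set g : ℝ → ℝ := fun δ =>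
    ((infDist z.fst S + δ) ^ p.toReal + (infDist z.snd T + δ) ^ p.toReal) ^ (1 / p.toReal)
  have hg : ContinuousAt g 0 := by
    fun_prop (disch := positivity)
  have hle : ∀ δ > 0, infDist z (WithLp.toLp p '' (S ×ˢ T)) ≤ g δ := by
    intro δ hδ
    obtain ⟨s, hs, hzs⟩ := (infDist_lt_iff hS).1 (lt_add_of_pos_right (infDist z.fst S) hδ)
    obtain ⟨t, ht, hzt⟩ := (infDist_lt_iff hT).1 (lt_add_of_pos_right (infDist z.snd T) hδ)
    calc infDist z (WithLp.toLp p '' (S ×ˢ T)) ≤ dist z (WithLp.toLp p (s, t)) :=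
          infDist_le_dist_of_mem ⟨(s, t), ⟨hs, ht⟩, rfl⟩
      _ ≤ g δ := by
          rw [WithLp.prod_dist_eq_add hp]
          simp only [g, WithLp.toLp_fst, WithLp.toLp_snd]
          gcongr
  simpa [g] using ge_of_tendsto (hg.tendsto.mono_left nhdsWithin_le_nhds)
    (eventually_nhdsWithin_of_forall (s := Ioi 0) hle)

section WithLpProd

variable {X Y : Type*} [NormedAddCommGroup X] [NormedSpace ℝ X]
  [NormedAddCommGroup Y] [NormedSpace ℝ Y] {p : ENNReal} [Fact (1 ≤ p)]

lemma toLp_image_convN_prod_subset {n m : ℕ} {A : Set X} {B : Set Y} :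
    WithLp.toLp p '' (convN n A ×ˢ convN m B) ⊆ convN (n * m) (WithLp.toLp p '' (A ×ˢ B)) := by
  rintro _ ⟨⟨u, v⟩, ⟨hu, hv⟩, rfl⟩
  exact image_convN_subset (WithLp.linearEquiv p ℝ (X × Y)).symm.toLinearMap
    ⟨_, prodMk_mem_convN_mul hu hv, rfl⟩

lemma toLp_image_scaledMidSet_prod_subset (hp : 0 < p.toReal) {a b α : ℝ} (ha : 0 ≤ a)
    (hb : 0 ≤ b) (hab : a ^ p.toReal + b ^ p.toReal = 1) :
    WithLp.toLp p '' (scaledMidSet X a α ×ˢ scaledMidSet Y b α) ⊆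
      midSet (WithLp p (X × Y)) α := by
  rintro _ ⟨⟨_, _⟩, ⟨⟨s, hs, t, ht, hst, rfl⟩, ⟨s', hs', t', ht', hst', rfl⟩⟩, rfl⟩
  have hball : ∀ {c : X} {c' : Y}, c ∈ closedBall 0 a → c' ∈ closedBall 0 b →
      WithLp.toLp p (c, c') ∈ closedBall 0 1 := by
    intro c c' hc hc'
    rw [mem_closedBall_zero_iff] at hc hc' ⊢
    calc ‖WithLp.toLp p (c, c')‖ ≤ (a ^ p.toReal + b ^ p.toReal) ^ (1 / p.toReal) := by
          rw [WithLp.prod_norm_eq_add hp]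
          simp only [WithLp.toLp_fst, WithLp.toLp_snd]
          gcongr
      _ = 1 := by rw [hab, Real.one_rpow]
  refine ⟨WithLp.toLp p (s, s'), hball hs hs', WithLp.toLp p (t, t'), hball ht ht', ?_, ?_⟩
  · rcases le_or_gt α 0 with hα | hα
    · exact hα.trans (norm_nonneg _)
    calc α = ((a * α) ^ p.toReal + (b * α) ^ p.toReal) ^ (1 / p.toReal) := by
          rw [Real.mul_rpow ha hα.le, Real.mul_rpow hb hα.le, ← add_mul, hab, one_mul,
            ← Real.rpow_mul hα.le, mul_one_div_cancel hp.ne', Real.rpow_one]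
      _ ≤ ‖WithLp.toLp p (s, s') - WithLp.toLp p (t, t')‖ := by
          rw [WithLp.prod_norm_eq_add hp]
          simp only [WithLp.sub_fst, WithLp.sub_snd, WithLp.toLp_fst, WithLp.toLp_snd]
          gcongr
  · simp [WithLp.ext_iff]

end WithLpProd

section Main

variable {X Y : Type*} [NormedAddCommGroup X] [NormedSpace ℝ X]
  [NormedAddCommGroup Y] [NormedSpace ℝ Y] {p : ENNReal} [Fact (1 ≤ p)]

lemma infDist_convN_sq_midSet_withLp_le (hp : 0 < p.toReal) {n : ℕ} (hn : n ≠ 0) {α : ℝ}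
    (hα : α ≤ 2) {z : WithLp p (X × Y)} (hz : ‖z‖ = 1) :
    infDist z (convN (n ^ 2) (midSet (WithLp p (X × Y)) α)) ≤
      (Cna X n α ^ p.toReal + Cna Y n α ^ p.toReal) ^ (1 / p.toReal) := by
  set A := convN n (scaledMidSet X ‖z.fst‖ α)
  set B := convN n (scaledMidSet Y ‖z.snd‖ α)
  have hAB : WithLp.toLp p '' (A ×ˢ B) ⊆ convN (n ^ 2) (midSet (WithLp p (X × Y)) α) := by
    rw [sq]
    refine toLp_image_convN_prod_subset.trans (convN_mono ?_)
    refine toLp_image_scaledMidSet_prod_subset hp (norm_nonneg _) (norm_nonneg _) ?_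
    rw [← WithLp.prod_norm_rpow_eq_add hp, hz, Real.one_rpow]
  have hA : A.Nonempty := ⟨0, mem_convN_of_mem (zero_mem_scaledMidSet _ hα) hn⟩
  have hB : B.Nonempty := ⟨0, mem_convN_of_mem (zero_mem_scaledMidSet _ hα) hn⟩
  have hfst : infDist z.fst A ≤ Cna X n α :=
    (infDist_convN_scaledMidSet_le hn hα _).trans
      (mul_le_of_le_one_left Cna_nonneg (hz ▸ WithLp.norm_fst_le (x := z)))
  have hsnd : infDist z.snd B ≤ Cna Y n α :=
    (infDist_convN_scaledMidSet_le hn hα _).trans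
      (mul_le_of_le_one_left Cna_nonneg (hz ▸ WithLp.norm_snd_le (x := z)))
  have : 0 ≤ infDist z.fst A := infDist_nonneg
  have : 0 ≤ infDist z.snd B := infDist_nonneg
  calc infDist z (convN (n ^ 2) (midSet (WithLp p (X × Y)) α))
      ≤ infDist z (WithLp.toLp p '' (A ×ˢ B)) :=
        infDist_le_infDist_of_subset hAB ((hA.prod hB).image _)
    _ ≤ (infDist z.fst A ^ p.toReal + infDist z.snd B ^ p.toReal) ^ (1 / p.toReal) :=
        infDist_withLp_prod_le hp hA hB z
    _ ≤ (Cna X n α ^ p.toReal + Cna Y n α ^ p.toReal) ^ (1 / p.toReal) := by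
        gcongr

theorem Cna_withLp_prod_sq_le (hp : p ≠ ⊤) (n : ℕ) (α : ℝ) :
    Cna (WithLp p (X × Y)) (n ^ 2) α ≤
      (Cna X n α ^ p.toReal + Cna Y n α ^ p.toReal) ^ (1 / p.toReal) := by
  have hR : 0 ≤ (Cna X n α ^ p.toReal + Cna Y n α ^ p.toReal) ^ (1 / p.toReal) :=
    Real.rpow_nonneg (add_nonneg (Real.rpow_nonneg Cna_nonneg _)
      (Real.rpow_nonneg Cna_nonneg _)) _
  refine Real.iSup_le (fun ⟨z, hz⟩ => ?_) hR
  rcases (convN (n ^ 2) (midSet (WithLp p (X × Y)) α)).eq_empty_or_nonempty with he | hne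
  · rw [he, infDist_empty]
    exact hR
  obtain ⟨hn, hM⟩ := convN_nonempty_iff.1 hne
  exact infDist_convN_sq_midSet_withLp_le (p.toReal_pos_iff_ne_top.mpr hp)
    ((pow_ne_zero_iff two_ne_zero).1 hn) (le_two_of_midSet_nonempty hM)
    (mem_sphere_zero_iff_norm.1 hz)

lemma Nat.tendsto_sqrt_atTop : Tendsto Nat.sqrt atTop atTop :=
  tendsto_atTop_atTop_of_monotone (fun _ _ h => Nat.sqrt_le_sqrt h)
    fun c => ⟨c ^ 2, (Nat.sqrt_eq' c).ge⟩

theorem UniformSliceD2P.withLp_prod (hp : p ≠ ⊤) (hX : UniformSliceD2P X)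
    (hY : UniformSliceD2P Y) : UniformSliceD2P (WithLp p (X × Y)) := by
  intro α hα0 hα2
  have hq : 0 < p.toReal := p.toReal_pos_iff_ne_top.mpr hp
  have hbound : Tendsto (fun n => (Cna X n α ^ p.toReal + Cna Y n α ^ p.toReal) ^ (1 / p.toReal))
      atTop (nhds 0) := by
    have hsum := ((hX α hα0 hα2).rpow_const_nhds_zero hq).add
      ((hY α hα0 hα2).rpow_const_nhds_zero hq)
    rw [add_zero] at hsum
    exact hsum.rpow_const_nhds_zero (by positivity)
  refine squeeze_zero' (Eventually.of_forall fun k => Cna_nonneg)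
    ?_ (hbound.comp Nat.tendsto_sqrt_atTop)
  filter_upwards [eventually_ne_atTop 0] with k hk
  exact (Cna_le_of_le (by simpa [Nat.sqrt_eq_zero] using hk) (Nat.sqrt_le' k)).trans
    (Cna_withLp_prod_sq_le hp _ α)

end Main

theorem stmt5_general (X Y : Type*) [NormedAddCommGroup X] [NormedSpace ℝ X]
    [NormedAddCommGroup Y] [NormedSpace ℝ Y]
    (p : ENNReal) [Fact (1 ≤ p)] (hp : p ≠ ⊤) (n : ℕ) (α : ℝ) :
    Cna (WithLp p (X × Y)) (n ^ 2) α ≤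
        (Cna X n α ^ p.toReal + Cna Y n α ^ p.toReal) ^ (1 / p.toReal) ∧
      (UniformSliceD2P X → UniformSliceD2P Y → UniformSliceD2P (WithLp p (X × Y))) :=
  ⟨Cna_withLp_prod_sq_le hp n α, UniformSliceD2P.withLp_prod hp⟩

theorem stmt5 (X Y : Type*) [NormedAddCommGroup X] [NormedSpace ℝ X] [CompleteSpace X]
    [NormedAddCommGroup Y] [NormedSpace ℝ Y] [CompleteSpace Y]
    (p : ENNReal) [Fact (1 ≤ p)] (hp : p ≠ ⊤) (n : ℕ) (α : ℝ) (hα : 0 < α) :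
    Cna (WithLp p (X × Y)) (n ^ 2) α ≤
        (Cna X n α ^ p.toReal + Cna Y n α ^ p.toReal) ^ (1 / p.toReal) ∧
      (UniformSliceD2P X → UniformSliceD2P Y → UniformSliceD2P (WithLp p (X × Y))) :=
  stmt5_general X Y p hp n α
end

section
/- Let H be a uniformly integrable subset of L¹(μ) over a finite measure space and ε > 0. Then there exists δ > 0 such that whenever g ∈ H and f ∈ L¹ satisfies d_m(f,0) < δ, one has ‖f+g‖₁ ≥ ‖f‖₁ + ‖g‖₁ − ε. -/
open MeasureTheory

noncomputable def dm {Ω : Type*} [MeasurableSpace Ω] (μ : Measure Ω)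
    (f g : Ω → ℝ) : ℝ :=
  sInf {ε : ℝ | 0 < ε ∧ μ {t | ε ≤ |f t - g t|} ≤ ENNReal.ofReal ε}

/-!
Pointwise `|a + b| ≥ |a| + |b| - 2 min(|a|, |b|)`, so it suffices to make `∫ min(|f|, |g|)` small.
Where `|f| < η` the minimum is below `η`; where `|g| ≥ M` it is below `|g|`, whose integral there
is small by uniform integrability; on the rest it is below `M`, but that rest lies in
`{η ≤ |f|}`, a set of measure at most `η` when `f` is close to `0` in measure.
-/

lemma abs_add_abs_sub_two_mul_min_le (a b : ℝ) : |a| + |b| - 2 * min |a| |b| ≤ |a + b| := by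
  rcases le_total |a| |b| with h | h
  · rw [min_eq_left h]
    linarith [add_comm a b ▸ abs_sub_abs_le_abs_add b a]
  · rw [min_eq_right h]
    linarith [abs_sub_abs_le_abs_add a b]

lemma min_abs_le_add_ite (a b : ℝ) {η : ℝ} (hη : 0 ≤ η) (M : ℝ) :
    min |a| |b| ≤ η + (if M ≤ |b| then |b| else 0) + (if η ≤ |a| then max M 0 else 0) := by
  split_ifs <;>
    linarith [min_le_left |a| |b|, min_le_right |a| |b|, abs_nonneg b, le_max_left M 0,
      le_max_right M 0]

section

variable {Ω : Type*} [MeasurableSpace Ω] {μ : Measure Ω}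

lemma integral_abs_add_abs_sub_two_mul_integral_min_le {f g : Ω → ℝ}
    (hf : Integrable f μ) (hg : Integrable g μ) :
    ∫ t, |f t| ∂μ + ∫ t, |g t| ∂μ - 2 * ∫ t, min |f t| |g t| ∂μ ≤ ∫ t, |f t + g t| ∂μ := by
  have hmin : Integrable (fun t => min |f t| |g t|) μ := hf.abs.inf hg.abs
  have hadd : Integrable (fun t => |f t| + |g t|) μ := hf.abs.add hg.abs
  calc ∫ t, |f t| ∂μ + ∫ t, |g t| ∂μ - 2 * ∫ t, min |f t| |g t| ∂μ
      = ∫ t, |f t| + |g t| - 2 * min |f t| |g t| ∂μ := by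
        rw [integral_sub hadd (hmin.const_mul 2), integral_add hf.abs hg.abs, integral_const_mul]
    _ ≤ ∫ t, |f t + g t| ∂μ :=
        integral_mono (hadd.sub (hmin.const_mul 2)) (hf.add hg).abs
          fun t => abs_add_abs_sub_two_mul_min_le (f t) (g t)

lemma integral_min_abs_le [IsFiniteMeasure μ] {f g : Ω → ℝ}
    (hf : Integrable f μ) (hg : Integrable g μ) {η : ℝ} (hη : 0 ≤ η) (M : ℝ) :
    ∫ t, min |f t| |g t| ∂μ ≤ η * μ.real Set.univ + ∫ t in {t | M ≤ |g t|}, |g t| ∂μ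
      + max M 0 * μ.real {t | η ≤ |f t|} := by
  set S := {t | M ≤ |g t|}
  set T := {t | η ≤ |f t|}
  have hS : NullMeasurableSet S μ := nullMeasurableSet_le aemeasurable_const hg.abs.aemeasurable
  have hT : NullMeasurableSet T μ := nullMeasurableSet_le aemeasurable_const hf.abs.aemeasurable
  have hgS : Integrable (S.indicator fun t => |g t|) μ := hg.abs.indicator₀ hS
  have hT' : Integrable (T.indicator fun _ => max M 0) μ := (integrable_const _).indicator₀ hT
  have hηS : Integrable (fun t => η + S.indicator (fun t => |g t|) t) μ :=
    (integrable_const η).add hgS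
  calc ∫ t, min |f t| |g t| ∂μ
      ≤ ∫ t, η + S.indicator (fun t => |g t|) t + T.indicator (fun _ => max M 0) t ∂μ := by
        refine integral_mono (hf.abs.inf hg.abs) (hηS.add hT') ?_
        intro t
        simpa only [Set.indicator_apply, S, T, Set.mem_ofPred_eq] using
          min_abs_le_add_ite (f t) (g t) hη M
    _ = η * μ.real Set.univ + ∫ t in S, |g t| ∂μ + max M 0 * μ.real T := by
        rw [integral_add hηS hT', integral_add (integrable_const η) hgS,
          integral_const, integral_indicator₀ hS, integral_indicator₀ hT, setIntegral_const,
          smul_eq_mul, smul_eq_mul, mul_comm η, mul_comm (max M 0)]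

lemma exists_measure_le_of_dm_lt [IsFiniteMeasure μ] {f : Ω → ℝ} {δ : ℝ} (h : dm μ f 0 < δ) :
    ∃ η, 0 < η ∧ η < δ ∧ μ.real {t | η ≤ |f t|} ≤ η := by
  have hne : {ε : ℝ | 0 < ε ∧ μ {t | ε ≤ |f t - 0|} ≤ ENNReal.ofReal ε}.Nonempty := by
    refine ⟨μ.real Set.univ + 1, by positivity, ?_⟩
    calc μ _ ≤ μ Set.univ := measure_mono (Set.subset_univ _)
      _ = ENNReal.ofReal (μ.real Set.univ) := (ofReal_measureReal).symm
      _ ≤ ENNReal.ofReal (μ.real Set.univ + 1) := ENNReal.ofReal_le_ofReal (by linarith)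
  obtain ⟨η, ⟨hη, hμη⟩, hηδ⟩ := (csInf_lt_iff ⟨0, fun _ hε => hε.1.le⟩ hne).mp h
  simp only [sub_zero] at hμη
  exact ⟨η, hη, hηδ, ENNReal.toReal_le_of_le_ofReal hη.le hμη⟩

end

theorem stmt9_general {Ω : Type*} [MeasurableSpace Ω] (μ : Measure Ω) [IsFiniteMeasure μ]
    (H : Set (Ω → ℝ)) (hInt : ∀ g ∈ H, Integrable g μ)
    (hUI : ∀ ε > (0:ℝ), ∃ M : ℝ, ∀ g ∈ H, ∫ t in {t | M ≤ |g t|}, |g t| ∂μ ≤ ε)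
    (ε : ℝ) (hε : 0 < ε) :
    ∃ δ > (0:ℝ), ∀ g ∈ H, ∀ f : Ω → ℝ, Integrable f μ → dm μ f 0 < δ →
      (∫ t, |f t| ∂μ) + (∫ t, |g t| ∂μ) - ε ≤ ∫ t, |f t + g t| ∂μ := by
  obtain ⟨M, hM⟩ := hUI (ε / 4) (by positivity)
  set K := μ.real Set.univ + max M 0 + 1
  have hK : 0 < K := by positivity
  refine ⟨ε / (4 * K), by positivity, fun g hg f hf hdm => ?_⟩
  obtain ⟨η, hη, hηδ, hfη⟩ := exists_measure_le_of_dm_lt hdm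
  have hηK : η * K ≤ ε / 4 :=
    calc η * K ≤ ε / (4 * K) * K := by gcongr
      _ = ε / 4 := by field_simp
  have hfM : max M 0 * μ.real {t | η ≤ |f t|} ≤ max M 0 * η := by gcongr
  linarith [integral_abs_add_abs_sub_two_mul_integral_min_le hf (hInt g hg),
    integral_min_abs_le hf (hInt g hg) hη.le M, hM g hg]

theorem stmt9 {Ω : Type*} [MeasurableSpace Ω] (μ : Measure Ω) [IsFiniteMeasure μ]
    (H : Set (Ω → ℝ)) (hInt : ∀ g ∈ H, Integrable g μ)
    (hBdd : ∃ C : ℝ, ∀ g ∈ H, ∫ t, |g t| ∂μ ≤ C)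
    (hUI : ∀ ε > (0:ℝ), ∃ M : ℝ, ∀ g ∈ H, ∫ t in {t | M ≤ |g t|}, |g t| ∂μ ≤ ε)
    (ε : ℝ) (hε : 0 < ε) :
    ∃ δ > (0:ℝ), ∀ g ∈ H, ∀ f : Ω → ℝ, Integrable f μ → dm μ f 0 < δ →
      (∫ t, |f t| ∂μ) + (∫ t, |g t| ∂μ) - ε ≤ ∫ t, |f t + g t| ∂μ :=
  stmt9_general μ H hInt hUI ε hε
end

section
/- Let X be a Banach space, x* ∈ S_{X*}, β > 0, ε > 0, α > 0, and suppose B_X = closure(conv({(x+y)/2 : x, y ∈ B_X, ‖x−y‖ ≥ α−ε})). Then the slice S(B_X, x*, β) contains two points u, v with ‖u−v‖ ≥ α−ε. -/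
open Metric Set

namespace ContinuousLinearMap

/-- The closed half-space `{f ≤ c}` is closed and convex, so it cannot contain `s` without
containing `closure (convexHull ℝ s)`. -/
theorem exists_mem_lt_apply_of_mem_closure_convexHull {E : Type*} [AddCommGroup E]
    [TopologicalSpace E] [Module ℝ E] (f : E →L[ℝ] ℝ) {s : Set E} {c : ℝ} {x : E}
    (hx : x ∈ closure (convexHull ℝ s)) (hcx : c < f x) : ∃ z ∈ s, c < f z := by
  by_contra! hs
  have hconvex : Convex ℝ {y : E | f y ≤ c} := convex_halfSpace_le f.toLinearMap.isLinear c
  have hclosed : IsClosed {y : E | f y ≤ c} := isClosed_le f.continuous continuous_const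
  exact not_le_of_gt hcx (closure_minimal (convexHull_min hs hconvex) hclosed hx)

variable {X : Type*} [NormedAddCommGroup X] [NormedSpace ℝ X]

theorem apply_le_opNorm_of_mem_closedBall (f : X →L[ℝ] ℝ) {x : X}
    (hx : x ∈ closedBall (0 : X) 1) : f x ≤ ‖f‖ :=
  calc f x ≤ ‖f x‖ := Real.le_norm_self _
    _ ≤ ‖f‖ * ‖x‖ := f.le_opNorm x
    _ ≤ ‖f‖ * 1 := by gcongr; simpa using hx
    _ = ‖f‖ := mul_one _

theorem exists_mem_closedBall_lt_apply (f : X →L[ℝ] ℝ) {c : ℝ} (hc : c < ‖f‖) :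
    ∃ x ∈ closedBall (0 : X) 1, c < f x := by
  obtain ⟨x, hx, hcx⟩ := f.exists_lt_apply_of_lt_opNorm hc
  have hx : x ∈ closedBall (0 : X) 1 := by simpa using hx.le
  rcases le_total 0 (f x) with hfx | hfx
  · exact ⟨x, hx, by rwa [Real.norm_of_nonneg hfx] at hcx⟩
  · refine ⟨-x, by simpa using hx, ?_⟩
    rwa [Real.norm_of_nonpos hfx, ← map_neg] at hcx

end ContinuousLinearMap

theorem stmt18_general {X : Type*} [NormedAddCommGroup X] [NormedSpace ℝ X]
    (f : X →L[ℝ] ℝ) (hf : ‖f‖ = 1) (β ε α : ℝ) (hβ : 0 < β)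
    (h : Metric.closedBall (0:X) 1 = closure (convexHull ℝ (midSet X (α - ε)))) :
    ∃ u ∈ {x ∈ Metric.closedBall (0:X) 1 | 1 - β < f x},
      ∃ v ∈ {x ∈ Metric.closedBall (0:X) 1 | 1 - β < f x},
        α - ε ≤ ‖u - v‖ := by
  obtain ⟨w, hw, hfw⟩ := f.exists_mem_closedBall_lt_apply (c := 1 - β / 2) (by linarith)
  obtain ⟨_, ⟨x, hx, y, hy, hxy, rfl⟩, hfz⟩ :=
    f.exists_mem_lt_apply_of_mem_closure_convexHull (h ▸ hw) hfw
  have hfx := f.apply_le_opNorm_of_mem_closedBall hx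
  have hfy := f.apply_le_opNorm_of_mem_closedBall hy
  simp only [map_smul, map_add, smul_eq_mul] at hfz
  -- `f x + f y > 2 - β` while both summands are at most `1`
  exact ⟨x, ⟨hx, by linarith⟩, y, ⟨hy, by linarith⟩, hxy⟩

theorem stmt18 {X : Type*} [NormedAddCommGroup X] [NormedSpace ℝ X] [CompleteSpace X]
    (f : X →L[ℝ] ℝ) (hf : ‖f‖ = 1) (β ε α : ℝ) (hβ : 0 < β) (hε : 0 < ε) (hα : 0 < α)
    (h : Metric.closedBall (0:X) 1 = closure (convexHull ℝ (midSet X (α - ε)))) :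
    ∃ u ∈ {x ∈ Metric.closedBall (0:X) 1 | 1 - β < f x},
      ∃ v ∈ {x ∈ Metric.closedBall (0:X) 1 | 1 - β < f x},
        α - ε ≤ ‖u - v‖ :=
  stmt18_general f hf β ε α hβ h
end
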